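/- arXiv:2602.04663 — 2 statements merged into one kernel-verified Lean document; each statement's English description precedes it below -/
import Mathlib

section
/- Let ν be a probability measure with density q with respect to π_ref satisfying 0 < ε ≤ q ≤ C π_ref-a.e., and define the KL-regularized objective J(π) = ∫ R dπ − β·KL(π‖π_ref). Then the proximal update monotonically improves the objective: J(T(ν)) ≥ J(ν) + (β/η)·KL(T(ν)‖ν); in particular J(T(ν)) ≥ J(ν). -/
/-!
The proximal update is the exponential tilt `T(ν) = ν.tilted f` of `ν` by
`f = η R / ((1 + η) β) - η / (1 + η) · log q`, which is chosen so that `R = (β + β/η) f + β log q`.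
With `Z = ∫ exp f dν`, the tilting formulas `log dT/dν = f - log Z` and
`log dT/dπ_ref = f - log Z + log q` make the `∫ f dT` and `∫ log q dT` terms cancel, leaving
`J(T) - (β/η) KL(T‖ν) = (β + β/η) log Z`, whereas `J(ν) = (β + β/η) ∫ f dν ≤ (β + β/η) log Z`
by Jensen's inequality for `exp`. Jensen applied to `-f` under `T` gives `KL(T‖ν) ≥ 0`.
-/

open MeasureTheory

/-- Kullback–Leibler divergence `∫ log(dμ/dν) dμ`, equal to `+∞` if `μ` is not
absolutely continuous with respect to `ν` (or if the log-likelihood ratio is not integrable). -/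
noncomputable def klDiv {X : Type*} [MeasurableSpace X] (μ ν : Measure X) : EReal :=
  open scoped Classical in
  if μ ≪ ν ∧ Integrable (llr μ ν) μ then ((∫ x, llr μ ν x ∂μ : ℝ) : EReal) else ⊤

section Tilted

open Real

variable {X : Type*} [MeasurableSpace X] {μ ρ : Measure X} {f : X → ℝ}

lemma klDiv_eq_integral_llr (hμρ : μ ≪ ρ) (h : Integrable (llr μ ρ) μ) :
    klDiv μ ρ = ((∫ x, llr μ ρ x ∂μ : ℝ) : EReal) := by
  rw [klDiv, if_pos ⟨hμρ, h⟩]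

variable [IsProbabilityMeasure μ]

lemma integral_le_log_integral_exp (hf : Integrable f μ)
    (hexp : Integrable (fun x ↦ exp (f x)) μ) : ∫ x, f x ∂μ ≤ log (∫ x, exp (f x) ∂μ) := by
  rw [le_log_iff_exp_le (integral_exp_pos hexp)]
  exact convexOn_exp.map_integral_le continuous_exp.continuousOn isClosed_univ
    (by simp) hf hexp

lemma log_integral_exp_le_integral_tilted (hexp : Integrable (fun x ↦ exp (f x)) μ)
    (hfT : Integrable f (μ.tilted f)) :
    log (∫ x, exp (f x) ∂μ) ≤ ∫ x, f x ∂μ.tilted f := by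
  have := isProbabilityMeasure_tilted hexp
  have hexp_neg : Integrable (fun x ↦ exp (-f x)) (μ.tilted f) := by
    simp [integrable_tilted_iff hexp, ← exp_add]
  have h := integral_le_log_integral_exp hfT.neg hexp_neg
  simp only [integral_exp_tilted, Pi.add_apply, Pi.neg_apply, add_neg_cancel, exp_zero,
    integral_const, probReal_univ, smul_eq_mul, mul_one, one_div, log_inv, integral_neg] at h
  linarith

lemma klDiv_tilted_self (hexp : Integrable (fun x ↦ exp (f x)) μ)
    (hfT : Integrable f (μ.tilted f)) :
    klDiv (μ.tilted f) μ = ((∫ x, f x ∂μ.tilted f - log (∫ x, exp (f x) ∂μ) : ℝ) : EReal) := by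
  have := isProbabilityMeasure_tilted hexp
  have hllr : llr (μ.tilted f) μ =ᵐ[μ.tilted f] fun x ↦ f x - log (∫ x, exp (f x) ∂μ) :=
    (tilted_absolutelyContinuous μ f).ae_le (log_rnDeriv_tilted_left_self hexp)
  rw [klDiv_eq_integral_llr (tilted_absolutelyContinuous μ f)
      ((hfT.sub (integrable_const _)).congr hllr.symm),
    integral_congr_ae hllr, integral_sub hfT (integrable_const _)]
  simp

lemma klDiv_tilted_self_nonneg (hexp : Integrable (fun x ↦ exp (f x)) μ)
    (hfT : Integrable f (μ.tilted f)) : 0 ≤ klDiv (μ.tilted f) μ := by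
  rw [klDiv_tilted_self hexp hfT, EReal.coe_nonneg, sub_nonneg]
  exact log_integral_exp_le_integral_tilted hexp hfT

lemma klDiv_tilted_left [SigmaFinite ρ] (hμρ : μ ≪ ρ) (hexp : Integrable (fun x ↦ exp (f x)) μ)
    (hfρ : AEMeasurable f ρ) (hfT : Integrable f (μ.tilted f))
    (hllrT : Integrable (llr μ ρ) (μ.tilted f)) :
    klDiv (μ.tilted f) ρ = ((∫ x, f x ∂μ.tilted f - log (∫ x, exp (f x) ∂μ)
      + ∫ x, llr μ ρ x ∂μ.tilted f : ℝ) : EReal) := by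
  have := isProbabilityMeasure_tilted hexp
  have hllr : llr (μ.tilted f) ρ =ᵐ[μ.tilted f] _ :=
    (tilted_absolutelyContinuous μ f).ae_le (llr_tilted_left hμρ hexp hfρ)
  have hfc : Integrable (fun x ↦ f x - log (∫ x, exp (f x) ∂μ)) (μ.tilted f) :=
    hfT.sub (integrable_const _)
  rw [klDiv_eq_integral_llr ((tilted_absolutelyContinuous μ f).trans hμρ)
      ((hfc.add hllrT).congr hllr.symm),
    integral_congr_ae hllr, integral_add hfc hllrT,
    integral_sub hfT (integrable_const _)]
  simp

noncomputable def klRegularizedObjective (R : X → ℝ) (β : ℝ) (ρ ν : Measure X) : EReal :=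
  ((∫ x, R x ∂ν : ℝ) : EReal) - (β : EReal) * klDiv ν ρ

theorem tilted_improves_klRegularizedObjective [SigmaFinite ρ] (hμρ : μ ≪ ρ)
    {R : X → ℝ} {β γ K L : ℝ} (hβγ : 0 ≤ β + γ) (hf : Measurable f)
    (hfK : ∀ᵐ x ∂μ, |f x| ≤ K) (hllrL : ∀ᵐ x ∂μ, |llr μ ρ x| ≤ L)
    (hR : R =ᵐ[μ] fun x ↦ (β + γ) * f x + β * llr μ ρ x) :
    klRegularizedObjective R β ρ μ + (γ : EReal) * klDiv (μ.tilted f) μ ≤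
      klRegularizedObjective R β ρ (μ.tilted f) ∧ 0 ≤ klDiv (μ.tilted f) μ := by
  have hTμ : μ.tilted f ≪ μ := tilted_absolutelyContinuous μ f
  have hexp : Integrable (fun x ↦ exp (f x)) μ :=
    .of_bound (by fun_prop) (exp K) <| hfK.mono fun x hx ↦ by
      simpa using (abs_le.mp hx).2
  have hfμ : Integrable f μ := .of_bound hf.aestronglyMeasurable K hfK
  have := isProbabilityMeasure_tilted hexp
  have hfT : Integrable f (μ.tilted f) := .of_bound hf.aestronglyMeasurable K (hTμ.ae_le hfK)
  have hllrμ : Integrable (llr μ ρ) μ :=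
    .of_bound (measurable_llr μ ρ).aestronglyMeasurable L hllrL
  have hllrT : Integrable (llr μ ρ) (μ.tilted f) :=
    .of_bound (measurable_llr μ ρ).aestronglyMeasurable L (hTμ.ae_le hllrL)
  have hR_integral : ∀ ν : Measure X, ν ≪ μ → Integrable f ν → Integrable (llr μ ρ) ν →
      ∫ x, R x ∂ν = (β + γ) * ∫ x, f x ∂ν + β * ∫ x, llr μ ρ x ∂ν := fun ν hν hfν hllrν ↦ by
    rw [integral_congr_ae (hν.ae_le hR), integral_add (hfν.const_mul _) (hllrν.const_mul _),
      integral_const_mul, integral_const_mul]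
  refine ⟨?_, klDiv_tilted_self_nonneg hexp hfT⟩
  rw [klRegularizedObjective, klRegularizedObjective, klDiv_eq_integral_llr hμρ hllrμ,
    klDiv_tilted_self hexp hfT, klDiv_tilted_left hμρ hexp hf.aemeasurable hfT hllrT,
    hR_integral μ .rfl hfμ hllrμ, hR_integral _ hTμ hfT hllrT]
  norm_cast
  linarith [mul_le_mul_of_nonneg_left (integral_le_log_integral_exp hfμ hexp) hβγ]

lemma llr_withDensity_ofReal [SigmaFinite ρ] {q : X → ℝ} (hq : Measurable q)
    (hq0 : ∀ᵐ x ∂ρ, 0 ≤ q x) :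
    llr (ρ.withDensity fun x ↦ ENNReal.ofReal (q x)) ρ =ᵐ[ρ] fun x ↦ log (q x) := by
  filter_upwards [Measure.rnDeriv_withDensity ρ hq.ennreal_ofReal, hq0] with x hx hqx
  rw [llr, hx, ENNReal.toReal_ofReal hqx]

lemma withDensity_ofReal_tilted {q : X → ℝ} (hq : Measurable q) (hq0 : ∀ᵐ x ∂ρ, 0 ≤ q x)
    (hf : Measurable f) :
    (ρ.withDensity fun x ↦ ENNReal.ofReal (q x)).tilted f =
      ρ.withDensity fun x ↦ ENNReal.ofReal (q x * exp (f x) / ∫ y, q y * exp (f y) ∂ρ) := by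
  have hZ : ∫ x, exp (f x) ∂ρ.withDensity (fun x ↦ ENNReal.ofReal (q x)) =
      ∫ x, q x * exp (f x) ∂ρ := by
    rw [integral_withDensity_eq_integral_toReal_smul hq.ennreal_ofReal
      (ae_of_all _ fun _ ↦ ENNReal.ofReal_lt_top)]
    refine integral_congr_ae (hq0.mono fun x hx ↦ ?_)
    simp only [ENNReal.toReal_ofReal hx, smul_eq_mul]
  rw [Measure.tilted, hZ, ← withDensity_mul _ hq.ennreal_ofReal (by fun_prop)]
  refine withDensity_congr_ae (hq0.mono fun x hx ↦ ?_)
  rw [Pi.mul_apply, ← ENNReal.ofReal_mul hx, ← mul_div_assoc]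

end Tilted

section ProximalPotential

open Real

variable {X : Type*} {R q : X → ℝ} {β η : ℝ}

lemma abs_log_le_max_of_mem_Icc {ε C t : ℝ} (hε : 0 < ε) (ht : ε ≤ t ∧ t ≤ C) :
    |log t| ≤ max |log ε| |log C| :=
  abs_le_max_abs_abs (log_le_log hε ht.1) (log_le_log (hε.trans_le ht.1) ht.2)

noncomputable def proximalPotential (R q : X → ℝ) (β η : ℝ) (x : X) : ℝ :=
  η * R x / ((1 + η) * β) - η / (1 + η) * log (q x)

lemma measurable_proximalPotential [MeasurableSpace X] (hR : Measurable R) (hq : Measurable q) :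
    Measurable (proximalPotential R q β η) := by
  unfold proximalPotential
  fun_prop

lemma eq_proximalPotential (hβ : β ≠ 0) (hη : η ≠ 0) (hη' : 1 + η ≠ 0) (x : X) :
    R x = (β + β / η) * proximalPotential R q β η x + β * log (q x) := by
  rw [proximalPotential]
  field_simp
  ring

lemma abs_proximalPotential_le {M L : ℝ} (hβ : 0 < β) (hη : 0 < η) {x : X} (hR : |R x| ≤ M)
    (hq : |log (q x)| ≤ L) :
    |proximalPotential R q β η x| ≤ η * M / ((1 + η) * β) + η / (1 + η) * L := by
  calc |proximalPotential R q β η x|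
      ≤ |η * R x / ((1 + η) * β)| + |η / (1 + η) * log (q x)| := abs_sub _ _
    _ ≤ _ := by
      gcongr ?_ + ?_
      · rw [abs_div, abs_mul, abs_of_pos hη, abs_of_pos (by positivity : 0 < (1 + η) * β)]
        gcongr
      · rw [abs_mul, abs_of_pos (by positivity : 0 < η / (1 + η))]
        gcongr

lemma mul_exp_proximalPotential (hη : 1 + η ≠ 0) {x : X} (hq : 0 < q x) :
    q x * exp (proximalPotential R q β η x) =
      exp (η * R x / ((1 + η) * β)) * q x ^ ((1 : ℝ) / (1 + η)) := by
  conv_lhs => arg 1; rw [← exp_log hq]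
  rw [proximalPotential, rpow_def_of_pos hq, ← exp_add, ← exp_add]
  congr 1
  field_simp
  ring

lemma withDensity_proximalUpdate_eq_tilted [MeasurableSpace X] {ρ : Measure X}
    (hη : 1 + η ≠ 0) (hR : Measurable R) (hq : Measurable q) (hq_pos : ∀ᵐ x ∂ρ, 0 < q x) :
    ρ.withDensity (fun x ↦ ENNReal.ofReal (exp (η * R x / ((1 + η) * β)) *
        q x ^ ((1 : ℝ) / (1 + η)) /
          ∫ y, exp (η * R y / ((1 + η) * β)) * q y ^ ((1 : ℝ) / (1 + η)) ∂ρ)) =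
      (ρ.withDensity fun x ↦ ENNReal.ofReal (q x)).tilted (proximalPotential R q β η) := by
  have hdensity : ∀ᵐ x ∂ρ, q x * exp (proximalPotential R q β η x) =
      exp (η * R x / ((1 + η) * β)) * q x ^ ((1 : ℝ) / (1 + η)) :=
    hq_pos.mono fun x hx ↦ mul_exp_proximalPotential hη hx
  rw [withDensity_ofReal_tilted hq (hq_pos.mono fun _ hx ↦ hx.le)
    (measurable_proximalPotential hR hq), integral_congr_ae hdensity]
  exact withDensity_congr_ae (hdensity.mono fun x hx ↦ by simp only [hx])

end ProximalPotential

/-- The proximal update monotonically improves the KL-regularized objective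
`J(π) = ∫ R dπ − β·KL(π‖π_ref)`: for a probability measure `ν` with density `q`
(with `0 < ε ≤ q ≤ C` a.e.) w.r.t. `π_ref`, one has
`J(T(ν)) ≥ J(ν) + (β/η)·KL(T(ν)‖ν)`, and in particular `J(T(ν)) ≥ J(ν)`. -/
theorem proximal_update_monotone_improvement
    {X : Type*} [MeasurableSpace X]
    (π_ref : Measure X) [IsProbabilityMeasure π_ref]
    (R : X → ℝ) (hRmeas : Measurable R) (M : ℝ) (hRbd : ∀ x, |R x| ≤ M)
    (β : ℝ) (hβ : 0 < β) (η : ℝ) (hη : 0 < η)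
    (ε C : ℝ) (hε : 0 < ε)
    (q : X → ℝ) (hqmeas : Measurable q)
    (hqbd : ∀ᵐ x ∂π_ref, ε ≤ q x ∧ q x ≤ C)
    (ν : Measure X) [IsProbabilityMeasure ν]
    (hν : ν = π_ref.withDensity (fun x => ENNReal.ofReal (q x)))
    (N : ℝ)
    (hN : N = ∫ x, Real.exp (η * R x / ((1 + η) * β)) * q x ^ ((1 : ℝ) / (1 + η)) ∂π_ref)
    (Tν : Measure X)
    (hTν : Tν = π_ref.withDensity (fun x =>
      ENNReal.ofReal (Real.exp (η * R x / ((1 + η) * β)) * q x ^ ((1 : ℝ) / (1 + η)) / N)))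
    (J : Measure X → EReal)
    (hJ : ∀ π : Measure X,
      J π = ((∫ x, R x ∂π : ℝ) : EReal) - (β : EReal) * klDiv π π_ref) :
    J Tν ≥ J ν + ((β / η : ℝ) : EReal) * klDiv Tν ν ∧ J Tν ≥ J ν := by
  obtain rfl : J = klRegularizedObjective R β π_ref := funext hJ
  have hq_pos : ∀ᵐ x ∂π_ref, 0 < q x := hqbd.mono fun x hx ↦ hε.trans_le hx.1
  have hνρ : ν ≪ π_ref := hν ▸ withDensity_absolutelyContinuous _ _
  have hllr : llr ν π_ref =ᵐ[ν] fun x ↦ Real.log (q x) :=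
    hνρ.ae_le (hν ▸ llr_withDensity_ofReal hqmeas (hq_pos.mono fun _ hx ↦ hx.le))
  have hlogq : ∀ᵐ x ∂ν, |Real.log (q x)| ≤ max |Real.log ε| |Real.log C| :=
    hνρ.ae_le (hqbd.mono fun x hx ↦ abs_log_le_max_of_mem_Icc hε hx)
  have hTν_tilted : Tν = ν.tilted (proximalPotential R q β η) := by
    rw [hTν, hN, hν]
    exact withDensity_proximalUpdate_eq_tilted (by positivity) hRmeas hqmeas hq_pos
  obtain ⟨himprove, hkl⟩ := tilted_improves_klRegularizedObjective (R := R) (γ := β / η) hνρ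
    (by positivity) (measurable_proximalPotential hRmeas hqmeas)
    (hlogq.mono fun x hx ↦ abs_proximalPotential_le hβ hη (hRbd x) hx)
    (by filter_upwards [hllr, hlogq] with x hx hb; rwa [hx])
    (hllr.mono fun x hx ↦ by
      simp only [hx]; exact eq_proximalPotential hβ.ne' hη.ne' (by positivity) x)
  rw [hTν_tilted]
  exact ⟨himprove, le_trans (le_add_of_nonneg_right
    (EReal.mul_nonneg (EReal.coe_nonneg.mpr (by positivity)) hkl)) himprove⟩
end

section
/- For every θ₀ ∈ ℝ, the stop-gradient PAR regression surrogate has θ-gradient equal to the negative of that of the proximal objective: (d/dθ) [ Σ_{x ∈ X} π_old(x)·(1/2)·(p(θ₀, x)/π_old(x))·(A(x) − log(p(θ, x)/π_old(x)))² ] evaluated at θ = θ₀ equals −(d/dθ) [ Σ_{x ∈ X} A(x)·p(θ, x) − Σ_{x ∈ X} p(θ, x)·log(p(θ, x)/π_old(x)) ] evaluated at θ = θ₀. -/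
/-!
Write `g x = p'(θ₀, x)` and `L x = log (p(θ₀, x) / π_old(x))`. Because the weight
`p(θ₀, x) / π_old(x)` is frozen, the `x`-th surrogate term has derivative `-(A x - L x) g x`,
while the `x`-th proximal term has derivative `(A x - L x) g x - g x`. The leftover `∑ x, g x`
vanishes since `∑ x, p(θ, x) = 1` for all `θ`.
-/

open Finset

theorem sum_hasDerivAt_eq_zero_of_sum_const {𝕜 F X : Type*} [NontriviallyNormedField 𝕜]
    [NormedAddCommGroup F] [NormedSpace 𝕜 F] [Fintype X] {f : 𝕜 → X → F} {f' : X → F}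
    {c : F} {θ₀ : 𝕜} (hsum : ∀ θ, ∑ x, f θ x = c)
    (hf : ∀ x, HasDerivAt (fun θ => f θ x) (f' x) θ₀) :
    ∑ x, f' x = 0 := by
  have hconst : HasDerivAt (fun θ => ∑ x, f θ x) (∑ x, f' x) θ₀ :=
    HasDerivAt.fun_sum fun x _ => hf x
  simp only [hsum] at hconst
  exact hconst.unique (hasDerivAt_const θ₀ c)

section LogRatio

variable {f : ℝ → ℝ} {f' w a θ₀ : ℝ}

theorem HasDerivAt.log_div_const (hf : HasDerivAt f f' θ₀) (hf₀ : f θ₀ ≠ 0) (hw : w ≠ 0) :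
    HasDerivAt (fun θ => Real.log (f θ / w)) (f' / f θ₀) θ₀ := by
  refine ((hf.div_const w).log (div_ne_zero hf₀ hw)).congr_deriv ?_
  field_simp

theorem HasDerivAt.mul_log_div_const (hf : HasDerivAt f f' θ₀) (hf₀ : f θ₀ ≠ 0) (hw : w ≠ 0) :
    HasDerivAt (fun θ => f θ * Real.log (f θ / w))
      (f' * Real.log (f θ₀ / w) + f') θ₀ := by
  refine (hf.fun_mul (hf.log_div_const hf₀ hw)).congr_deriv ?_
  field_simp

theorem HasDerivAt.stopGrad_sq_log_div_const (hf : HasDerivAt f f' θ₀) (hf₀ : f θ₀ ≠ 0)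
    (hw : w ≠ 0) :
    HasDerivAt (fun θ => w * (1 / 2) * (f θ₀ / w) * (a - Real.log (f θ / w)) ^ 2)
      (-(a - Real.log (f θ₀ / w)) * f') θ₀ := by
  refine ((((hasDerivAt_const θ₀ a).fun_sub (hf.log_div_const hf₀ hw)).fun_pow 2).const_mul
    (w * (1 / 2) * (f θ₀ / w))).congr_deriv ?_
  field_simp
  ring

end LogRatio

theorem par_surrogate_gradient_general
    {X : Type*} [Fintype X]
    (π_old : X → ℝ) (hold_pos : ∀ x, 0 < π_old x)
    (A : X → ℝ)
    (p : ℝ → X → ℝ)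
    (hpos : ∀ θ x, 0 < p θ x)
    (hsum : ∀ θ, ∑ x, p θ x = 1)
    (hdiff : ∀ x, Differentiable ℝ (fun θ => p θ x))
    (θ₀ : ℝ) :
    deriv (fun θ => ∑ x, π_old x * (1 / 2) * (p θ₀ x / π_old x)
        * (A x - Real.log (p θ x / π_old x)) ^ 2) θ₀
      = - deriv (fun θ => (∑ x, A x * p θ x)
          - ∑ x, p θ x * Real.log (p θ x / π_old x)) θ₀ := by
  set g : X → ℝ := fun x => deriv (fun θ => p θ x) θ₀
  have hg : ∀ x, HasDerivAt (fun θ => p θ x) (g x) θ₀ := fun x => (hdiff x θ₀).hasDerivAt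
  have hp₀ : ∀ x, p θ₀ x ≠ 0 := fun x => (hpos θ₀ x).ne'
  have hπ : ∀ x, π_old x ≠ 0 := fun x => (hold_pos x).ne'
  have hsum_g : ∑ x, g x = 0 := sum_hasDerivAt_eq_zero_of_sum_const hsum hg
  have hsurrogate := HasDerivAt.fun_sum (u := univ) fun x _ =>
    (hg x).stopGrad_sq_log_div_const (a := A x) (hp₀ x) (hπ x)
  have hproximal := HasDerivAt.fun_sub
    (HasDerivAt.fun_sum (u := univ) fun x _ => (hg x).const_mul (A x))
    (HasDerivAt.fun_sum (u := univ) fun x _ => (hg x).mul_log_div_const (hp₀ x) (hπ x))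
  rw [hsurrogate.deriv, hproximal.deriv, sum_add_distrib, hsum_g, add_zero,
    ← sum_sub_distrib, ← sum_neg_distrib]
  exact sum_congr rfl fun x _ => by ring

/-- The stop-gradient PAR regression surrogate has `θ`-gradient equal to the negative of
that of the proximal objective: at any `θ₀`,
`(d/dθ)[Σ_x π_old(x)·(1/2)·(p(θ₀,x)/π_old(x))·(A(x) − log(p(θ,x)/π_old(x)))²]|_{θ=θ₀}
  = −(d/dθ)[Σ_x A(x)·p(θ,x) − Σ_x p(θ,x)·log(p(θ,x)/π_old(x))]|_{θ=θ₀}`. -/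
theorem par_surrogate_gradient
    {X : Type*} [Fintype X]
    (π_old : X → ℝ) (hold_pos : ∀ x, 0 < π_old x) (hold_sum : ∑ x, π_old x = 1)
    (A : X → ℝ)
    (p : ℝ → X → ℝ)
    (hpos : ∀ θ x, 0 < p θ x)
    (hsum : ∀ θ, ∑ x, p θ x = 1)
    (hdiff : ∀ x, Differentiable ℝ (fun θ => p θ x))
    (θ₀ : ℝ) :
    deriv (fun θ => ∑ x, π_old x * (1 / 2) * (p θ₀ x / π_old x)
        * (A x - Real.log (p θ x / π_old x)) ^ 2) θ₀
      = - deriv (fun θ => (∑ x, A x * p θ x)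
          - ∑ x, p θ x * Real.log (p θ x / π_old x)) θ₀ :=
  par_surrogate_gradient_general π_old hold_pos A p hpos hsum hdiff θ₀
end
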